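/- Let d ≥ 1 and define g(y) = ln cosh(y) − y²/2 for y ∈ ℝ. There exists c > 0 such that, for every n ≥ 1, every family of vectors a_1,…,a_n ∈ ℝ^d satisfying ∑_{i=1}^n a_i ᵗa_i = I_d (the d×d identity matrix), and every z ∈ ℝ^d, one has ∑_{i=1}^n g(n^{1/4}⟨z, a_i⟩) ≤ −c‖z‖⁴ / (1 + ‖z‖²/√n). -/

import Mathlib

open MeasureTheory Filter Matrix Real

noncomputable section

/-- `T_n(x) = ∑ i, x_i ᵗx_i`. -/
def Tmat (d n : ℕ) (x : Fin n → Fin d → ℝ) : Matrix (Fin d) (Fin d) ℝ :=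
  ∑ i, Matrix.vecMulVec (x i) (x i)

/-- `S_n(x) = x_1 + … + x_n`. -/
def Svec (d n : ℕ) (x : Fin n → Fin d → ℝ) : Fin d → ℝ := ∑ i, x i

/-- the Hamiltonian `(1/2)⟨T_n⁻¹ S_n, S_n⟩`. -/
def Hfun (d n : ℕ) (x : Fin n → Fin d → ℝ) : ℝ :=
  (1 / 2) * dotProduct ((Tmat d n x)⁻¹.mulVec (Svec d n x)) (Svec d n x)

/-- normalization constant `Z_n`. -/
def Zconst (d : ℕ) (ρ : Measure (Fin d → ℝ)) (n : ℕ) : ℝ :=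
  ∫ x : Fin n → Fin d → ℝ,
    Set.indicator {x | 0 < (Tmat d n x).det} (fun x => Real.exp (Hfun d n x)) x
    ∂ Measure.pi fun _ => ρ

/-- the Curie-Weiss model of SOC `μ̃_{n,ρ}`. -/
def CW (d : ℕ) (ρ : Measure (Fin d → ℝ)) (n : ℕ) : Measure (Fin n → Fin d → ℝ) :=
  (Measure.pi fun _ => ρ).withDensity fun x =>
    Set.indicator {x | 0 < (Tmat d n x).det}
      (fun x => ENNReal.ofReal (Real.exp (Hfun d n x) / Zconst d ρ n)) x

/-- covariance matrix `Σ = ∫ z ᵗz dρ(z)`. -/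
def covM (d : ℕ) (ρ : Measure (Fin d → ℝ)) : Matrix (Fin d) (Fin d) ℝ :=
  Matrix.of fun i j => ∫ z, z i * z j ∂ρ

/-- `M₄(z) = ∑ (∫ yᵢyⱼyₖyₗ dρ) zᵢzⱼzₖzₗ`. -/
def M4 (d : ℕ) (ρ : Measure (Fin d → ℝ)) (z : Fin d → ℝ) : ℝ :=
  ∑ i : Fin d, ∑ j : Fin d, ∑ k : Fin d, ∑ l : Fin d,
    (∫ y, y i * y j * y k * y l ∂ρ) * (z i * z j * z k * z l)

/-- symmetric measure: invariant under `z ↦ -z`. -/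
def SymMeas (d : ℕ) (ρ : Measure (Fin d → ℝ)) : Prop := ρ.map (fun z => -z) = ρ

/-- condition `(*)` : some Gaussian exponential moment. -/
def CondStar (d : ℕ) (ρ : Measure (Fin d → ℝ)) : Prop :=
  ∃ v₀ > (0:ℝ), Integrable (fun z => Real.exp (v₀ * dotProduct z z)) ρ

/-- the ρ-measure of every vector hyperplane is `< 1/√e`. -/
def HypLt (d : ℕ) (ρ : Measure (Fin d → ℝ)) : Prop :=
  ∀ s : Fin d → ℝ, s ≠ 0 →
    ρ {z | dotProduct s z = 0} < ENNReal.ofReal (1 / Real.sqrt (Real.exp 1))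

/-- non-degeneracy: the ρ-measure of every affine hyperplane is `< 1`. -/
def NonDeg (d : ℕ) (ρ : Measure (Fin d → ℝ)) : Prop :=
  ∀ s : Fin d → ℝ, s ≠ 0 → ∀ c : ℝ, ρ {z | dotProduct s z = c} < 1

-- positive square root of a positive semi-definite matrix (junk value otherwise).
open scoped Classical in
def psqrt (d : ℕ) (M : Matrix (Fin d) (Fin d) ℝ) : Matrix (Fin d) (Fin d) ℝ :=
  if h : M.PosSemidef then h.1.eigenvectorUnitary.1 *
    diagonal (((↑) : ℝ → ℝ) ∘ (√·) ∘ h.1.eigenvalues) *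
    (star h.1.eigenvectorUnitary : Matrix (Fin d) (Fin d) ℝ) else 0

/-- Euclidean norm on `ℝ^d`. -/
def vnorm (d : ℕ) (v : Fin d → ℝ) : ℝ := Real.sqrt (dotProduct v v)

/-- Frobenius norm on `d × d` matrices. -/
def mnorm (d : ℕ) (M : Matrix (Fin d) (Fin d) ℝ) : ℝ :=
  Real.sqrt (∑ i : Fin d, ∑ j : Fin d, (M i j) ^ 2)

/-- the log-Laplace transform `Λ` of `(Z, Z ᵗZ)`, with values in `(-∞, +∞]`. -/
def Lam (d : ℕ) (ρ : Measure (Fin d → ℝ)) (u : Fin d → ℝ)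
    (A : Matrix (Fin d) (Fin d) ℝ) : EReal :=
  ENNReal.log (∫⁻ z, ENNReal.ofReal
    (Real.exp (dotProduct u z + dotProduct (A.mulVec z) z)) ∂ρ)

/-- the Cramér transform `I` of `(Z, Z ᵗZ)`. -/
def CramerI (d : ℕ) (ρ : Measure (Fin d → ℝ)) (x : Fin d → ℝ)
    (M : Matrix (Fin d) (Fin d) ℝ) : EReal :=
  ⨆ p : (Fin d → ℝ) × {A : Matrix (Fin d) (Fin d) ℝ // A.IsSymm},
    ((dotProduct x p.1 + (M * (p.2 : Matrix (Fin d) (Fin d) ℝ)).trace : ℝ) : EReal)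
      - Lam d ρ p.1 p.2

end

/-!
Comparing derivatives on `[0, ∞)` twice gives `tanh y ≤ y - y³/(3(1+y²))` and then
`log cosh y - y²/2 ≤ -y⁴/(12(1+y²))` for all real `y`. For `yᵢ = n^{1/4}⟨z, aᵢ⟩` the frame
condition gives `∑ yᵢ² = √n ‖z‖²`, and Sedrakyan's form of Cauchy–Schwarz bounds
`∑ yᵢ⁴/(1+yᵢ²)` below by `(∑ yᵢ²)²/(n + ∑ yᵢ²) = ‖z‖⁴/(1 + ‖z‖²/√n)`; so `c = 1/12` works.
-/

lemma apply_zero_le_apply_of_deriv_nonneg {f f' : ℝ → ℝ} (hf : ∀ x, HasDerivAt f (f' x) x)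
    (hf' : ∀ x, 0 < x → 0 ≤ f' x) {y : ℝ} (hy : 0 ≤ y) : f 0 ≤ f y := by
  refine monotoneOn_of_hasDerivWithinAt_nonneg (convex_Ici 0)
    (fun x _ => (hf x).continuousAt.continuousWithinAt) (fun x _ => (hf x).hasDerivWithinAt)
    (fun x hx => hf' x ?_) Set.self_mem_Ici hy hy
  rwa [interior_Ici] at hx

namespace Real

theorem sinh_div_cosh_le {y : ℝ} (hy : 0 ≤ y) :
    sinh y / cosh y ≤ y - y ^ 3 / (3 * (1 + y ^ 2)) := by
  have hderiv : ∀ x, HasDerivAt (fun y => y - y ^ 3 / (3 * (1 + y ^ 2)) - sinh y / cosh y)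
      ((sinh x / cosh x) ^ 2 - (x ^ 4 + 3 * x ^ 2) / (3 * (1 + x ^ 2) ^ 2)) x := by
    intro x
    have hden : HasDerivAt (fun y : ℝ => 3 * (1 + y ^ 2)) (3 * (2 * x)) x := by
      simpa using ((hasDerivAt_pow 2 x).const_add 1).const_mul 3
    refine (((hasDerivAt_id x).sub ((hasDerivAt_pow 3 x).div hden (by positivity))).sub
      ((hasDerivAt_sinh x).div (hasDerivAt_cosh x) (cosh_pos x).ne')).congr_deriv ?_
    field_simp
    ring
  have hderiv_nonneg : ∀ x : ℝ, 0 < x →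
      0 ≤ (sinh x / cosh x) ^ 2 - (x ^ 4 + 3 * x ^ 2) / (3 * (1 + x ^ 2) ^ 2) := by
    intro x hx
    have hsinh : x ≤ sinh x := self_le_sinh_iff.2 hx.le
    rw [div_pow, cosh_sq', sub_nonneg]
    calc (x ^ 4 + 3 * x ^ 2) / (3 * (1 + x ^ 2) ^ 2) ≤ x ^ 2 / (1 + x ^ 2) := by
          rw [div_le_div_iff₀ (by positivity) (by positivity)]
          nlinarith [pow_nonneg (sq_nonneg x) 2, sq_nonneg x]
      _ ≤ sinh x ^ 2 / (1 + sinh x ^ 2) := by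
          rw [div_le_div_iff₀ (by positivity) (by positivity)]
          nlinarith [mul_le_mul hsinh hsinh hx.le (hx.le.trans hsinh)]
  simpa using apply_zero_le_apply_of_deriv_nonneg hderiv hderiv_nonneg hy

theorem log_cosh_le_of_nonneg {y : ℝ} (hy : 0 ≤ y) :
    log (cosh y) ≤ y ^ 2 / 2 - y ^ 4 / (12 * (1 + y ^ 2)) := by
  have hderiv : ∀ x, HasDerivAt (fun y => y ^ 2 / 2 - y ^ 4 / (12 * (1 + y ^ 2)) - log (cosh y))
      (x - x ^ 3 * (x ^ 2 + 2) / (6 * (1 + x ^ 2) ^ 2) - sinh x / cosh x) x := by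
    intro x
    have hden : HasDerivAt (fun y : ℝ => 12 * (1 + y ^ 2)) (12 * (2 * x)) x := by
      simpa using ((hasDerivAt_pow 2 x).const_add 1).const_mul 12
    refine ((((hasDerivAt_pow 2 x).div_const 2).sub
      ((hasDerivAt_pow 4 x).div hden (by positivity))).sub
      ((hasDerivAt_cosh x).log (cosh_pos x).ne')).congr_deriv ?_
    field_simp
    ring
  have hderiv_nonneg : ∀ x : ℝ, 0 < x →
      0 ≤ x - x ^ 3 * (x ^ 2 + 2) / (6 * (1 + x ^ 2) ^ 2) - sinh x / cosh x := by
    intro x hx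
    have hcube : x ^ 3 * (x ^ 2 + 2) / (6 * (1 + x ^ 2) ^ 2) ≤ x ^ 3 / (3 * (1 + x ^ 2)) := by
      rw [div_le_div_iff₀ (by positivity) (by positivity)]
      nlinarith [pow_nonneg hx.le 5, pow_nonneg hx.le 7]
    linarith [sinh_div_cosh_le hx.le]
  simpa [sub_nonneg] using apply_zero_le_apply_of_deriv_nonneg hderiv hderiv_nonneg hy

theorem log_cosh_sub_sq_div_two_le (y : ℝ) :
    log (cosh y) - y ^ 2 / 2 ≤ -(y ^ 4 / (12 * (1 + y ^ 2))) := by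
  have h := log_cosh_le_of_nonneg (abs_nonneg y)
  rw [cosh_abs, sq_abs, show |y| ^ 4 = y ^ 4 by rw [pow_abs, abs_of_nonneg (by positivity)]] at h
  linarith

end Real

theorem sum_log_cosh_sub_sq_div_two_le {ι : Type*} [Fintype ι] (y : ι → ℝ) :
    ∑ i, (log (cosh (y i)) - y i ^ 2 / 2) ≤
      -((∑ i, y i ^ 2) ^ 2 / (12 * (Fintype.card ι + ∑ i, y i ^ 2))) := by
  have hTitu := Finset.sq_sum_div_le_sum_sq_div Finset.univ (fun i => y i ^ 2)
    (g := fun i => 1 + y i ^ 2) (fun i _ => by positivity)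
  rw [Finset.sum_add_distrib, Finset.sum_const, Finset.card_univ, nsmul_one] at hTitu
  calc ∑ i, (log (cosh (y i)) - y i ^ 2 / 2) ≤ ∑ i, -(y i ^ 4 / (12 * (1 + y i ^ 2))) :=
        Finset.sum_le_sum fun i _ => log_cosh_sub_sq_div_two_le (y i)
    _ = -((∑ i, (y i ^ 2) ^ 2 / (1 + y i ^ 2)) / 12) := by
        rw [Finset.sum_div, ← Finset.sum_neg_distrib]
        refine Finset.sum_congr rfl fun i _ => ?_
        field_simp
    _ ≤ _ := by
        rw [neg_le_neg_iff, mul_comm, ← div_div]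
        gcongr

theorem sum_dotProduct_sq_eq_of_sum_vecMulVec_eq_one {ι m : Type*} [Fintype ι] [Fintype m]
    [DecidableEq m] {a : ι → m → ℝ} (ha : ∑ i, vecMulVec (a i) (a i) = 1) (z : m → ℝ) :
    ∑ i, (z ⬝ᵥ a i) ^ 2 = z ⬝ᵥ z := by
  have h := congrArg (fun M => z ⬝ᵥ M *ᵥ z) ha
  simp only [sum_mulVec, dotProduct_sum, one_mulVec] at h
  rw [← h]
  refine Finset.sum_congr rfl fun i _ => ?_
  simp [vecMulVec_mulVec, dotProduct_comm, sq]

theorem sum_logCosh_quartic_bound_general (d : ℕ) :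
    ∃ c > (0:ℝ), ∀ n : ℕ, 1 ≤ n → ∀ a : Fin n → Fin d → ℝ,
      (∑ i, Matrix.vecMulVec (a i) (a i)) = 1 → ∀ z : Fin d → ℝ,
      (∑ i, (Real.log (Real.cosh ((n:ℝ) ^ ((1:ℝ)/4) * dotProduct z (a i)))
        - ((n:ℝ) ^ ((1:ℝ)/4) * dotProduct z (a i)) ^ 2 / 2))
      ≤ -(c * vnorm d z ^ 4) / (1 + vnorm d z ^ 2 / Real.sqrt n) := by
  refine ⟨1 / 12, by norm_num, fun n hn a ha z => ?_⟩
  have hquarter : ((n : ℝ) ^ ((1 : ℝ) / 4)) ^ 2 = √n := by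
    rw [← rpow_natCast, ← rpow_mul n.cast_nonneg, sqrt_eq_rpow]
    norm_num
  have hnorm : vnorm d z ^ 2 = z ⬝ᵥ z := sq_sqrt (dotProduct_self_star_nonneg z)
  have hsum : ∑ i, ((n : ℝ) ^ ((1 : ℝ) / 4) * z ⬝ᵥ a i) ^ 2 = √n * vnorm d z ^ 2 := by
    simp_rw [mul_pow, hquarter, ← Finset.mul_sum, sum_dotProduct_sq_eq_of_sum_vecMulVec_eq_one ha,
      hnorm]
  refine (sum_log_cosh_sub_sq_div_two_le _).trans_eq ?_
  have hn_sq : (n : ℝ) = √n ^ 2 := (sq_sqrt n.cast_nonneg).symm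
  have hsqrt_pos : 0 < √(n : ℝ) := sqrt_pos.2 (by exact_mod_cast hn)
  set s := √(n : ℝ)
  rw [hsum, Fintype.card_fin, hn_sq]
  field_simp

/-- uniform quartic upper bound for `∑ g(n^{1/4}⟨z,aᵢ⟩)`
where `g(y) = ln cosh y - y²/2`. -/
theorem sum_logCosh_quartic_bound (d : ℕ) (hd : 1 ≤ d) :
    ∃ c > (0:ℝ), ∀ n : ℕ, 1 ≤ n → ∀ a : Fin n → Fin d → ℝ,
      (∑ i, Matrix.vecMulVec (a i) (a i)) = 1 → ∀ z : Fin d → ℝ,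
      (∑ i, (Real.log (Real.cosh ((n:ℝ) ^ ((1:ℝ)/4) * dotProduct z (a i)))
        - ((n:ℝ) ^ ((1:ℝ)/4) * dotProduct z (a i)) ^ 2 / 2))
      ≤ -(c * vnorm d z ^ 4) / (1 + vnorm d z ^ 2 / Real.sqrt n) :=
  sum_logCosh_quartic_bound_general d
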